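/- arXiv:2206.00512 — 2 statements merged into one kernel-verified Lean document; each statement's English description precedes it below -/
import Mathlib

section
/- Simplex failure-rule soundness: suppose x is a feasible point of the equation x_i = ∑_{j≠i} c_j·x_j with x_i < l(x_i), and for every j ≠ i, if c_j > 0 then x_j = u(x_j), and if c_j < 0 then x_j = l(x_j). Then the derived upper bound u'(x_i) := ∑_{c_j>0} c_j·u(x_j) + ∑_{c_j<0} c_j·l(x_j) satisfies u'(x_i) < l(x_i); hence no assignment satisfying the equation and the bounds l(x_j) ≤ x_j ≤ u(x_j) for j ≠ i can satisfy x_i ≥ l(x_i). -/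
open Finset

section DerivedUpperBound

variable {ι R : Type*} [Ring R] [LinearOrder R] (s : Finset ι) (c lo hi : ι → R)

/-- The bound on `∑ j ∈ s, c j * x j` obtained by pushing every `x j` to the end of
`[lo j, hi j]` that maximises `c j * x j`. -/
def derivedUpperBound : R :=
  ∑ j ∈ s.filter (fun j => 0 < c j), c j * hi j + ∑ j ∈ s.filter (fun j => c j < 0), c j * lo j

theorem sum_mul_eq_sum_pos_add_sum_neg (f : ι → R) :
    ∑ j ∈ s, c j * f j =
      ∑ j ∈ s.filter (fun j => 0 < c j), c j * f j +
        ∑ j ∈ s.filter (fun j => c j < 0), c j * f j := by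
  simp only [sum_filter, ← sum_add_distrib]
  refine sum_congr rfl fun j _ => ?_
  rcases lt_trichotomy (c j) 0 with h | h | h
  · simp [h, h.not_gt]
  · simp [h]
  · simp [h, h.not_gt]

variable {s c lo hi}

theorem sum_mul_eq_derivedUpperBound {x : ι → R}
    (hx : ∀ j ∈ s, (0 < c j → x j = hi j) ∧ (c j < 0 → x j = lo j)) :
    ∑ j ∈ s, c j * x j = derivedUpperBound s c lo hi := by
  rw [sum_mul_eq_sum_pos_add_sum_neg, derivedUpperBound]
  congr 1 <;> refine sum_congr rfl fun j hj => ?_ <;> rw [mem_filter] at hj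
  · rw [(hx j hj.1).1 hj.2]
  · rw [(hx j hj.1).2 hj.2]

theorem sum_mul_le_derivedUpperBound [IsOrderedRing R] {y : ι → R}
    (hy : ∀ j ∈ s, lo j ≤ y j ∧ y j ≤ hi j) :
    ∑ j ∈ s, c j * y j ≤ derivedUpperBound s c lo hi := by
  rw [sum_mul_eq_sum_pos_add_sum_neg, derivedUpperBound]
  refine add_le_add (sum_le_sum fun j hj => ?_) (sum_le_sum fun j hj => ?_) <;>
    rw [mem_filter] at hj
  · exact mul_le_mul_of_nonneg_left (hy j hj.1).2 hj.2.le
  · exact mul_le_mul_of_nonpos_left (hy j hj.1).1 hj.2.le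

end DerivedUpperBound

theorem simplex_failure_rule_sound
    {n : ℕ} (x c l u : Fin n → ℝ) (i : Fin n)
    (heq : x i = ∑ j ∈ Finset.univ.erase i, c j * x j)
    (hviol : x i < l i)
    (hpressed : ∀ j, j ≠ i →
      (0 < c j → x j = u j) ∧ (c j < 0 → x j = l j)) :
    ((∑ j ∈ (Finset.univ.erase i).filter (fun j => 0 < c j), c j * u j) +
     (∑ j ∈ (Finset.univ.erase i).filter (fun j => c j < 0), c j * l j) < l i) ∧
    (∀ y : Fin n → ℝ,
      y i = ∑ j ∈ Finset.univ.erase i, c j * y j →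
      (∀ j, j ≠ i → l j ≤ y j ∧ y j ≤ u j) →
      ¬ (l i ≤ y i)) := by
  have hbound : derivedUpperBound (univ.erase i) c l u < l i := by
    rwa [← sum_mul_eq_derivedUpperBound fun j hj => hpressed j (ne_of_mem_erase hj), ← heq]
  refine ⟨hbound, fun y hy hyb => not_le.mpr ?_⟩
  calc y i = ∑ j ∈ univ.erase i, c j * y j := hy
    _ ≤ derivedUpperBound (univ.erase i) c l u :=
      sum_mul_le_derivedUpperBound fun j hj => hyb j (ne_of_mem_erase hj)
    _ < l i := hbound
end

section
/- Combining two Farkas certificates into an infeasibility certificate: let A be an m×n real matrix and l ≤ u bound vectors. Suppose f_u, f_l ∈ R^m are such that for all V with A·V = 0 and l ≤ V ≤ u, the row r = f_uᵀ·A satisfies u'(x_i) = max over the box of (r + e_i)·V, and the row s = f_lᵀ·A satisfies l'(x_i) = min over the box of (s + e_i)·V, where e_i is the i-th standard basis vector. If u'(x_i) < l'(x_i), then for w = f_u − f_l, the row c = wᵀ·A satisfies max over the box [l,u] of c·V ≤ u'(x_i) − l'(x_i) < 0; consequently the system A·V = 0, l ≤ V ≤ u is infeasible. -/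
/-- Box maximum of the linear functional `c · V` over the box `[l, u]`. -/
noncomputable def boxMax {n : ℕ} (l u c : Fin n → ℝ) : ℝ :=
  (∑ j ∈ Finset.univ.filter (fun j => 0 < c j), c j * u j) +
  (∑ j ∈ Finset.univ.filter (fun j => c j < 0), c j * l j)

/-- Box minimum of the linear functional `c · V` over the box `[l, u]`. -/
noncomputable def boxMin {n : ℕ} (l u c : Fin n → ℝ) : ℝ :=
  (∑ j ∈ Finset.univ.filter (fun j => 0 < c j), c j * l j) +
  (∑ j ∈ Finset.univ.filter (fun j => c j < 0), c j * u j)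

/-!
`boxMax l u` is the support function of the box `[l, u]`, so it is subadditive, and
`boxMin l u c = -boxMax l u (-c)`. The `e_i` terms cancel in `(fu - fl)ᵀ A`, giving the bound
`u' - l' < 0`; a feasible `V` would satisfy `0 = (fu - fl)ᵀ A V ≤ boxMax`, a contradiction.
-/

section BoxBounds

variable {n : ℕ} {l u : Fin n → ℝ}

theorem boxMax_eq_sum_max (hlu : ∀ j, l j ≤ u j) (c : Fin n → ℝ) :
    boxMax l u c = ∑ j, max (c j * l j) (c j * u j) := by
  rw [boxMax, Finset.sum_filter, Finset.sum_filter, ← Finset.sum_add_distrib]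
  refine Finset.sum_congr rfl fun j _ => ?_
  rcases lt_trichotomy (c j) 0 with hc | hc | hc
  · rw [if_neg hc.not_gt, if_pos hc, max_eq_left (mul_le_mul_of_nonpos_left (hlu j) hc.le),
      zero_add]
  · simp [hc]
  · rw [if_pos hc, if_neg hc.not_gt, max_eq_right (mul_le_mul_of_nonneg_left (hlu j) hc.le),
      add_zero]

theorem boxMin_eq_neg_boxMax_neg (c : Fin n → ℝ) : boxMin l u c = -boxMax l u (-c) := by
  simp only [boxMin, boxMax, Pi.neg_apply, neg_pos, neg_lt_zero, neg_mul, Finset.sum_neg_distrib]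
  ring

theorem boxMax_add_le (hlu : ∀ j, l j ≤ u j) (a b : Fin n → ℝ) :
    boxMax l u (a + b) ≤ boxMax l u a + boxMax l u b := by
  simp only [boxMax_eq_sum_max hlu, ← Finset.sum_add_distrib]
  refine Finset.sum_le_sum fun j _ => max_le ?_ ?_ <;> simp only [Pi.add_apply, add_mul]
  · exact add_le_add (le_max_left _ _) (le_max_left _ _)
  · exact add_le_add (le_max_right _ _) (le_max_right _ _)

theorem boxMax_sub_le (hlu : ∀ j, l j ≤ u j) (a b : Fin n → ℝ) :
    boxMax l u (a - b) ≤ boxMax l u a - boxMin l u b := by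
  rw [boxMin_eq_neg_boxMax_neg, sub_neg_eq_add, sub_eq_add_neg]
  exact boxMax_add_le hlu a (-b)

theorem dotProduct_le_boxMax {c V : Fin n → ℝ} (hV : ∀ j, l j ≤ V j ∧ V j ≤ u j) :
    c ⬝ᵥ V ≤ boxMax l u c := by
  rw [boxMax_eq_sum_max fun j => (hV j).1.trans (hV j).2]
  refine Finset.sum_le_sum fun j _ => ?_
  rcases le_total 0 (c j) with hc | hc
  · exact le_max_of_le_right (mul_le_mul_of_nonneg_left (hV j).2 hc)
  · exact le_max_of_le_left (mul_le_mul_of_nonpos_left (hV j).1 hc)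

end BoxBounds

theorem combine_farkas_certificates
    {m n : ℕ} (A : Matrix (Fin m) (Fin n) ℝ) (l u : Fin n → ℝ)
    (hlu : ∀ j, l j ≤ u j) (i : Fin n)
    (fu fl : Fin m → ℝ) (u' l' : ℝ)
    (hu' : boxMax l u (Matrix.vecMul fu A + Pi.single i 1) = u')
    (hl' : boxMin l u (Matrix.vecMul fl A + Pi.single i 1) = l')
    (hcontra : u' < l') :
    boxMax l u (Matrix.vecMul (fu - fl) A) ≤ u' - l' ∧
    ¬ ∃ V : Fin n → ℝ, A.mulVec V = 0 ∧ ∀ j, l j ≤ V j ∧ V j ≤ u j := by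
  have hcert : boxMax l u (Matrix.vecMul (fu - fl) A) ≤ u' - l' := by
    have hshift : Matrix.vecMul (fu - fl) A =
        (Matrix.vecMul fu A + Pi.single i 1) - (Matrix.vecMul fl A + Pi.single i 1) := by
      rw [Matrix.sub_vecMul, add_sub_add_right_eq_sub]
    rw [hshift, ← hu', ← hl']
    exact boxMax_sub_le hlu _ _
  refine ⟨hcert, fun ⟨V, hAV, hV⟩ => ?_⟩
  have hzero : Matrix.vecMul (fu - fl) A ⬝ᵥ V = 0 := by
    rw [← Matrix.dotProduct_mulVec, hAV, dotProduct_zero]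
  linarith [dotProduct_le_boxMax (c := Matrix.vecMul (fu - fl) A) hV]
end
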